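/- For every ε > 0 and every pair of costs 0 < c₁ < c₂, there exists a probability distribution P over two queries such that the ratio cost(𝓛_LFU)/cost(𝓛_LEC) is at least c₂/c₁ − ε, where the cache size is 1, 𝓛_LFU caches the most frequent query, and 𝓛_LEC caches the query maximizing P(q)·c(q). -/
import Mathlib


open Finset

theorem stmt_3 (ε c₁ c₂ : ℝ) (hε : 0 < ε) (hc₁ : 0 < c₁) (hc₁₂ : c₁ < c₂) :
    ∃ p : ℝ, 0 < p ∧ p < 1 ∧
      let P : Fin 2 → ℝ := ![p, 1 - p]
      let c : Fin 2 → ℝ := ![c₁, c₂]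
      let cost : Finset (Fin 2) → ℝ := fun 𝓛 => ∑ q ∈ univ \ 𝓛, P q * c q
      -- LFU caches the more frequent query q₁ = 0; LEC caches the maximizer of P·c, q₂ = 1
      P 1 < P 0 ∧ P 0 * c 0 ≤ P 1 * c 1 ∧
      c₂ / c₁ - ε ≤ cost {0} / cost {1} := by
  have hc₂ : 0 < c₂ := hc₁.trans hc₁₂
  set δ := min ε ((c₂ - c₁) / c₁) with hδdef
  have hδpos : 0 < δ := lt_min hε (div_pos (by linarith) hc₁)
  have hδle : δ * c₁ ≤ c₂ - c₁ := by
    have h := min_le_right ε ((c₂ - c₁) / c₁)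
    have : δ * c₁ ≤ ((c₂ - c₁) / c₁) * c₁ := by nlinarith
    rwa [div_mul_cancel₀ _ (ne_of_gt hc₁)] at this
  have hδε : δ ≤ ε := min_le_left _ _
  have hD : 0 < 2 * c₂ - δ * c₁ := by nlinarith
  set q : ℝ := c₂ / (2 * c₂ - δ * c₁) with hqdef
  have hq : q * (2 * c₂ - δ * c₁) = c₂ := div_mul_cancel₀ _ (ne_of_gt hD)
  have hq0 : 0 < q := by positivity
  have hq1 : q < 1 := by nlinarith [mul_pos hδpos hc₁]
  have hqc : 0 < q * c₁ := by positivity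
  have hcc : c₂ / c₁ * c₁ = c₂ := div_mul_cancel₀ _ (ne_of_gt hc₁)
  refine ⟨q, hq0, hq1, ?_, ?_, ?_⟩
  · simp only [Matrix.cons_val_one, Matrix.head_cons, Matrix.cons_val_zero]
    nlinarith [mul_pos hδpos hc₁]
  · simp only [Matrix.cons_val_one, Matrix.head_cons, Matrix.cons_val_zero]
    nlinarith [mul_nonneg hq0.le (show (0:ℝ) ≤ c₂ - c₁ - δ * c₁ by linarith)]
  · have h0 : (univ \ ({0} : Finset (Fin 2))) = {1} := by decide
    have h1 : (univ \ ({1} : Finset (Fin 2))) = {0} := by decide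
    simp only [h0, h1, Finset.sum_singleton, Matrix.cons_val_one, Matrix.head_cons,
      Matrix.cons_val_zero]
    have eq1 : (c₂ / c₁ - δ) * (q * c₁) = (1 - q) * c₂ := by
      linear_combination q * hcc + hq
    have eq2 : c₂ / c₁ - δ = (1 - q) * c₂ / (q * c₁) := by
      rw [← eq1, mul_div_cancel_right₀ _ (ne_of_gt hqc)]
    linarith
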